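/- Let R and S be nonnegative integer vectors in ℤ^n with equal component sums and each component at most n. There exists a symmetric n×n (0,1)-matrix with row sum vector R and column sum vector S if and only if R = S and R ⪯ R*. -/

import Mathlib

/-- The multiset of components of a vector. -/
def vecMS {n : ℕ} (v : Fin n → ℕ) : Multiset ℕ := Multiset.map v Finset.univ.val

/-- The sum of the `k` largest elements of a multiset of natural numbers. -/
def topSum (M : Multiset ℕ) (k : ℕ) : ℕ := ((M.sort (· ≤ ·)).reverse.take k).sum

/-- `MajorizedBy S R` means `S ⪯ R`: the component sums agree and every
partial sum of the weakly decreasing rearrangement of `R` dominates the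
corresponding partial sum for `S`. -/
def MajorizedBy (S R : Multiset ℕ) : Prop := S.sum = R.sum ∧ ∀ k, topSum S k ≤ topSum R k

/-- The conjugate `R*` of (the weakly decreasing rearrangement of) `R`,
viewed as an integer partition. -/
def conjMS (M : Multiset ℕ) : Multiset ℕ :=
  (Multiset.range M.sum).map fun j => (M.filter (fun x => j + 1 ≤ x)).card

/-!
After sorting, `R ⪯ R*` says `∑_{i<k} R i ≤ ∑_i min (R i) k` for every `k`. It is necessary
because the ones of a `(0,1)`-matrix lying in any `k` columns number at most `min (R i) k` in
row `i`. It is sufficient by Havel–Hakimi laying off: the largest row `R 0 = d + 1` is put on the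
diagonal and on the `d` next largest rows, where, among the rows equal to the `d`-th largest value
`c`, the *last* ones are chosen so that the residual sequence stays decreasing. The residual
sequence inherits the inequalities: at level `k` this follows from the hypothesis at level `k + 1`
when the first `k` rows were all lowered, and otherwise from the hypothesis at level `q`, the
number of rows exceeding `k`, or from the bound `R i ≤ d + 1`.
-/

open Finset

lemma topSum_map_range {f : ℕ → ℕ} (hf : Antitone f) (N k : ℕ) :
    topSum ((range N).val.map f) k = ∑ i ∈ range (min k N), f i := by
  have hsorted : ((List.range N).map f).reverse.Pairwise (· ≤ ·) := by
    rw [List.pairwise_reverse]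
    exact List.pairwise_lt_range.map _ (fun a b h => hf h.le)
  have hsort : ((range N).val.map f).sort (· ≤ ·) = ((List.range N).map f).reverse := by
    rw [show (range N).val.map f = (((List.range N).map f).reverse : Multiset ℕ) by
      simp [Multiset.range]]
    rw [Multiset.coe_sort, List.mergeSort_eq_self _ hsorted]
  rw [topSum, hsort, List.reverse_reverse, ← List.map_take, List.take_range,
    sum_eq_multiset_sum]
  rfl

lemma sum_range_card_filter_eq_sum_min (M : Multiset ℕ) (K : ℕ) :
    ∑ j ∈ range K, (M.filter (fun x => j + 1 ≤ x)).card = (M.map (min · K)).sum := by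
  induction M using Multiset.induction_on with
  | empty => simp
  | cons a M ih =>
    have hcount : ∑ j ∈ range K, (if j + 1 ≤ a then 1 else 0) = min a K := by
      rw [sum_boole, Nat.cast_id,
        show (range K).filter (fun j => j + 1 ≤ a) = range (min a K) by
          ext j; simp only [mem_filter, mem_range]; omega,
        card_range]
    simp only [Multiset.filter_cons, Multiset.card_add, Multiset.map_cons, Multiset.sum_cons,
      sum_add_distrib, ih, apply_ite Multiset.card, Multiset.card_singleton,
      Multiset.card_zero, hcount]

lemma antitone_card_filter_succ_le (M : Multiset ℕ) :
    Antitone fun j => (M.filter (fun x => j + 1 ≤ x)).card :=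
  fun _ _ hij => Multiset.card_le_card (Multiset.monotone_filter_right _ fun _ h => by omega)

lemma topSum_conjMS (M : Multiset ℕ) (k : ℕ) :
    topSum (conjMS M) k = (M.map (min · k)).sum := by
  rw [conjMS, ← range_val, topSum_map_range (antitone_card_filter_succ_le M),
    sum_range_card_filter_eq_sum_min]
  refine congrArg _ (Multiset.map_congr rfl fun x hx => ?_)
  have := Multiset.le_sum_of_mem hx
  omega

lemma sum_conjMS (M : Multiset ℕ) : (conjMS M).sum = M.sum := by
  rw [conjMS, ← range_val, ← sum_eq_multiset_sum, sum_range_card_filter_eq_sum_min]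
  conv_rhs => rw [← Multiset.map_id M]
  exact congrArg _ (Multiset.map_congr rfl fun x hx => min_eq_left (Multiset.le_sum_of_mem hx))

lemma sum_range_min_eq_sum_range {t : ℕ → ℕ} {n : ℕ} (ht : ∀ i, n ≤ i → t i = 0) (k : ℕ) :
    ∑ i ∈ range (min k n), t i = ∑ i ∈ range k, t i :=
  sum_subset (range_subset_range.2 (min_le_left k n)) fun i hik hin =>
    ht i (by simp only [mem_range] at hik hin; omega)

lemma Antitone.eq_zero_of_le {t : ℕ → ℕ} (ht : Antitone t) {n : ℕ} (htn : t n = 0) {i : ℕ}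
    (hi : n ≤ i) : t i = 0 :=
  Nat.eq_zero_of_le_zero (htn ▸ ht hi)

lemma Fin.univ_val_map_val (n : ℕ) :
    (univ : Finset (Fin n)).val.map Fin.val = (range n).val := by
  rw [← Nat.Iio_eq_range, ← Fin.map_valEmbedding_univ]; rfl

lemma exists_antitone_perm {n : ℕ} (R : Fin n → ℕ) :
    ∃ (e : Equiv.Perm (Fin n)) (t : ℕ → ℕ), Antitone t ∧ t n = 0 ∧ ∀ i : Fin n, t i = R (e i) := by
  refine ⟨Fin.revPerm.trans (Tuple.sort R),
    fun i => if h : i < n then R (Tuple.sort R (Fin.rev ⟨i, h⟩)) else 0, ?_, by simp, by simp⟩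
  intro i j hij
  by_cases hj : j < n
  · simp only [dif_pos hj, dif_pos (hij.trans_lt hj)]
    exact Tuple.monotone_sort R (Fin.rev_le_rev.2 hij)
  · simp [hj]

lemma vecMS_eq_map_range {n : ℕ} {R : Fin n → ℕ} {e : Equiv.Perm (Fin n)} {t : ℕ → ℕ}
    (ht : ∀ i : Fin n, t i = R (e i)) : vecMS R = (range n).val.map t := by
  rw [vecMS, ← Multiset.map_univ_val_equiv e, Multiset.map_map, ← Fin.univ_val_map_val,
    Multiset.map_map]
  exact Multiset.map_congr rfl fun i _ => (ht i).symm

/-- `MajorizedByConj n t` is `t ⪯ t*` for an antitone `t` vanishing from `n` on: by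
`topSum_conjMS`, the `k`-th partial sum of `t*` is `∑ i < n, min (t i) k`. -/
def MajorizedByConj (n : ℕ) (t : ℕ → ℕ) : Prop :=
  ∀ k, ∑ i ∈ range k, t i ≤ ∑ i ∈ range n, min (t i) k

lemma majorizedBy_conjMS_iff {n : ℕ} {t : ℕ → ℕ} (ht : Antitone t) (htn : t n = 0) :
    MajorizedBy ((range n).val.map t) (conjMS ((range n).val.map t)) ↔ MajorizedByConj n t := by
  simp only [MajorizedBy, sum_conjMS, true_and, topSum_conjMS, topSum_map_range ht,
    sum_range_min_eq_sum_range fun i => ht.eq_zero_of_le htn, Multiset.map_map]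
  rfl

def SymmRealizable {n : ℕ} (r : Fin n → ℕ) : Prop :=
  ∃ A : Matrix (Fin n) (Fin n) ℕ, (∀ i j, A i j = 0 ∨ A i j = 1) ∧ A.IsSymm ∧
    ∀ i, ∑ j, A i j = r i

lemma SymmRealizable.comp_perm {n : ℕ} {r : Fin n → ℕ} (h : SymmRealizable r)
    (e : Equiv.Perm (Fin n)) : SymmRealizable (r ∘ e) := by
  obtain ⟨A, h01, hsymm, hrow⟩ := h
  exact ⟨A.submatrix e e, fun i j => h01 _ _, hsymm.submatrix e,
    fun i => (Equiv.sum_comp e (A (e i))).trans (hrow (e i))⟩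

lemma sum_colSum_le_sum_min_rowSum {m n : Type*} [Fintype m] [Fintype n] (A : Matrix m n ℕ)
    (hA : ∀ i j, A i j ≤ 1) (u : Finset n) :
    ∑ j ∈ u, ∑ i, A i j ≤ ∑ i, min (∑ j, A i j) #u := by
  rw [sum_comm]
  refine sum_le_sum fun i _ => le_min (sum_le_sum_of_subset (subset_univ u)) ?_
  simpa using sum_le_sum fun j (_ : j ∈ u) => hA i j

lemma SymmRealizable.majorizedByConj {n : ℕ} {t : ℕ → ℕ} (ht : ∀ i, n ≤ i → t i = 0)
    (h : SymmRealizable fun i : Fin n => t i) : MajorizedByConj n t := by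
  obtain ⟨A, h01, hsymm, hrow⟩ := h
  intro k
  set u : Finset (Fin n) := univ.filter fun j => (j : ℕ) < k
  have hu : #u ≤ k := by
    simpa using card_le_card_of_injOn (t := range k) Fin.val
      (fun j hj => mem_range.2 (mem_filter.1 hj).2) Fin.val_injective.injOn
  calc ∑ i ∈ range k, t i = ∑ j ∈ u, ∑ i, A i j := by
        have hfilter : (range n).filter (· < k) = range (min k n) := by
          ext i; simp only [mem_filter, mem_range]; omega
        rw [← sum_range_min_eq_sum_range ht, ← hfilter, sum_filter,
          ← Fin.sum_univ_eq_sum_range (fun i => if i < k then t i else 0), ← sum_filter]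
        exact sum_congr rfl fun j _ =>
          (hrow j).symm.trans (sum_congr rfl fun i _ => hsymm.apply i j)
    _ ≤ ∑ i, min (∑ j, A i j) #u :=
        sum_colSum_le_sum_min_rowSum A (fun i j => by rcases h01 i j with h | h <;> omega) u
    _ ≤ ∑ i ∈ range n, min (t i) k := by
        rw [← Fin.sum_univ_eq_sum_range (fun i => min (t i) k)]
        exact sum_le_sum fun i _ => min_le_min (hrow i).le hu

lemma SymmRealizable.cons {n : ℕ} {r : Fin n → ℕ} (h : SymmRealizable r) (δ : Fin n → ℕ)
    (hδ : ∀ i, δ i ≤ 1) : SymmRealizable (Fin.cons (1 + ∑ i, δ i) (δ + r) : Fin (n + 1) → ℕ) := by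
  obtain ⟨A, h01, hsymm, hrow⟩ := h
  have hδ01 : ∀ i, δ i = 0 ∨ δ i = 1 := fun i => by have := hδ i; omega
  refine ⟨Fin.cons (Fin.cons 1 δ) fun i => Fin.cons (δ i) (A i), ?_, ?_, ?_⟩
  · intro i j
    cases i using Fin.cases <;> cases j using Fin.cases <;> simp [h01, hδ01]
  · refine Matrix.IsSymm.ext fun i j => ?_
    cases i using Fin.cases <;> cases j using Fin.cases <;> simp [hsymm.apply]
  · intro i
    cases i using Fin.cases <;> simp [Fin.sum_cons, hrow, add_comm]

lemma Antitone.exists_lt_iff_le {s : ℕ → ℕ} (hs : Antitone s) {c N : ℕ} (hN : s N < c) :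
    ∃ b ≤ N, ∀ i, i < b ↔ c ≤ s i := by
  classical
  have hex : ∃ i, s i < c := ⟨N, hN⟩
  refine ⟨Nat.find hex, Nat.find_min' hex hN, fun i => ⟨fun hi => not_lt.1 (Nat.find_min hex hi),
    fun hi => not_le.1 fun hle => ((hs hle).trans_lt (Nat.find_spec hex)).not_ge hi⟩⟩

lemma sum_min_one_eq {s : ℕ → ℕ} {n p : ℕ} (hp : p ≤ n) (hs : ∀ i, i < p ↔ 1 ≤ s i) :
    ∑ i ∈ range n, min (s i) 1 = p := by
  rw [← sum_range_add_sum_Ico _ hp,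
    sum_congr rfl fun i hi => show min (s i) 1 = 1 by have := (hs i).1 (mem_range.1 hi); omega,
    sum_congr rfl fun i hi => show min (s i) 1 = 0 by
      have := (hs i).not.1 (not_lt.2 (mem_Ico.1 hi).1); omega]
  simp

/-- For `d ≥ 1`, `c` is the `d`-th largest entry of the antitone `s` and `[a, d + β)` is the block
of entries equal to it. -/
structure IsTieBlock (s : ℕ → ℕ) (d a β c : ℕ) : Prop where
  le : a ≤ d
  one_le : 1 ≤ c
  lt_iff : ∀ i, i < a ↔ c < s i
  le_iff : ∀ i, i < d + β ↔ c ≤ s i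

lemma exists_isTieBlock {s : ℕ → ℕ} (hs : Antitone s) {n d : ℕ} (hsn : s n = 0)
    (hd : d ≤ ∑ i ∈ range n, min (s i) 1) : ∃ a β c, IsTieBlock s d a β c := by
  obtain ⟨p, hpn, hp⟩ := hs.exists_lt_iff_le (c := 1) (N := n) (by omega)
  rw [sum_min_one_eq hpn hp] at hd
  cases d with
  | zero =>
    exact ⟨0, 0, s 0 + 1, ⟨le_rfl, by omega, fun i => by have := hs i.zero_le; omega,
      fun i => by have := hs i.zero_le; omega⟩⟩
  | succ d =>
    have hc : 1 ≤ s d := (hp d).1 (by omega)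
    obtain ⟨a, had, ha⟩ := hs.exists_lt_iff_le (c := s d + 1) (N := d) (by omega)
    obtain ⟨b, -, hb⟩ := hs.exists_lt_iff_le (c := s d) (N := n) (by omega)
    have hdb : d < b := (hb d).2 le_rfl
    refine ⟨a, b - (d + 1), s d, ⟨by omega, hc, fun i => ha i, fun i => ?_⟩⟩
    rw [← hb i]; omega

/-- The tie-broken positions of the `d` largest entries: the whole block above `c`, and the
*last* `d - a` places of the block `[a, d + β)` equal to `c`, so that lowering them by one keeps
the sequence antitone. -/
def layOffSet (a β d : ℕ) : Finset ℕ := range a ∪ Ico (a + β) (d + β)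

def layOff (s : ℕ → ℕ) (D : Finset ℕ) (i : ℕ) : ℕ := s i - if i ∈ D then 1 else 0

lemma mem_layOffSet {a β d i : ℕ} : i ∈ layOffSet a β d ↔ i < a ∨ a + β ≤ i ∧ i < d + β := by
  simp [layOffSet]

lemma card_layOffSet {a β d : ℕ} (had : a ≤ d) : #(layOffSet a β d) = d := by
  rw [layOffSet, card_union_of_disjoint (disjoint_left.2 fun i h1 h2 => by
    rw [mem_range] at h1; rw [mem_Ico] at h2; omega),
    card_range, Nat.card_Ico]
  omega

lemma layOff_le (s : ℕ → ℕ) (D : Finset ℕ) (i : ℕ) : layOff s D i ≤ s i := Nat.sub_le _ _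

lemma layOff_add_ite {s : ℕ → ℕ} {D : Finset ℕ} {i : ℕ} (hD : i ∈ D → 1 ≤ s i) :
    layOff s D i + (if i ∈ D then 1 else 0) = s i := by
  unfold layOff; split_ifs with h <;> [have := hD h; skip] <;> omega

lemma sum_layOff_add_card {s : ℕ → ℕ} {D : Finset ℕ} (hD : ∀ i ∈ D, 1 ≤ s i) (I : Finset ℕ) :
    ∑ i ∈ I, layOff s D i + #(I ∩ D) = ∑ i ∈ I, s i := by
  calc ∑ i ∈ I, layOff s D i + #(I ∩ D)
      = ∑ i ∈ I, (layOff s D i + if i ∈ D then 1 else 0) := by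
        rw [sum_add_distrib, sum_boole, filter_mem_eq_inter, Nat.cast_id]
    _ = ∑ i ∈ I, s i := sum_congr rfl fun i _ => layOff_add_ite (hD i)

namespace IsTieBlock

variable {s : ℕ → ℕ} {d a β c : ℕ}

lemma add_le (h : IsTieBlock s d a β c) {n : ℕ} (hsn : s n = 0) : d + β ≤ n := by
  have := h.one_le
  have := (h.le_iff n).not.2 (by omega)
  omega

lemma one_le_of_mem (h : IsTieBlock s d a β c) {i : ℕ} (hi : i ∈ layOffSet a β d) : 1 ≤ s i := by
  have := h.le
  have := (h.le_iff i).1 (by rw [mem_layOffSet] at hi; omega)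
  have := h.one_le
  omega

lemma layOffSet_subset (h : IsTieBlock s d a β c) {n : ℕ} (hsn : s n = 0) :
    layOffSet a β d ⊆ range n := fun i hi => by
  have := h.add_le hsn; rw [mem_layOffSet] at hi; have := h.le; rw [mem_range]; omega

lemma le_of_notMem (h : IsTieBlock s d a β c) (hs : Antitone s) {i : ℕ}
    (hi : i ∉ layOffSet a β d) : s i ≤ s d := by
  rw [mem_layOffSet] at hi
  by_cases hid : d ≤ i
  · exact hs hid
  · have h1 := (h.lt_iff i).not.1 (by omega)
    have h2 := (h.le_iff d).1 (by omega)
    omega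

lemma antitone_layOff (h : IsTieBlock s d a β c) (hs : Antitone s) :
    Antitone (layOff s (layOffSet a β d)) := by
  intro i j hij
  have hsij := hs hij
  unfold layOff
  simp only [mem_layOffSet]
  have := h.lt_iff i; have := h.lt_iff j; have := h.le_iff i; have := h.le_iff j
  split_ifs <;> omega

end IsTieBlock

lemma sub_one_le_layOff (s : ℕ → ℕ) (D : Finset ℕ) (i : ℕ) : s i - 1 ≤ layOff s D i := by
  unfold layOff; split_ifs <;> omega

lemma sum_layOff_le_of_bound_le {s : ℕ → ℕ} {n d k : ℕ} (D : Finset ℕ) (hsd : ∀ i, s i ≤ d + 1)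
    (hsn : ∀ i, n ≤ i → s i = 0) (hk : d + 1 ≤ k) :
    ∑ i ∈ range k, layOff s D i ≤ ∑ i ∈ range n, min (layOff s D i) k := by
  rw [← sum_range_min_eq_sum_range fun i hi =>
    Nat.eq_zero_of_le_zero ((layOff_le s D i).trans (hsn i hi).le)]
  calc _ ≤ ∑ i ∈ range n, layOff s D i :=
        sum_le_sum_of_subset (range_subset_range.2 (min_le_right k n))
    _ = _ := sum_congr rfl fun i _ =>
        (min_eq_left ((layOff_le s D i).trans ((hsd i).trans hk))).symm

lemma sum_layOff_le_of_lt {s : ℕ → ℕ} (hs : Antitone s) {n d k : ℕ} (D : Finset ℕ)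
    (hsn : s n = 0) (hsd : ∀ i, s i ≤ d + 1) (hk : k + 1 ≤ s d) :
    ∑ i ∈ range k, layOff s D i ≤ ∑ i ∈ range n, min (layOff s D i) k := by
  have hdn : d < n := by
    by_contra h
    have := hs (not_lt.1 h)
    omega
  calc ∑ i ∈ range k, layOff s D i ≤ ∑ i ∈ range k, (d + 1) :=
        sum_le_sum fun i _ => (layOff_le s D i).trans (hsd i)
    _ = ∑ i ∈ range (d + 1), min (layOff s D i) k := by
        rw [sum_congr rfl fun i hi => min_eq_right (show k ≤ layOff s D i by
          have := hs (mem_range_succ_iff.1 hi); have := sub_one_le_layOff s D i; omega)]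
        simp [mul_comm]
    _ ≤ ∑ i ∈ range n, min (layOff s D i) k := sum_le_sum_of_subset (range_subset_range.2 hdn)

lemma sum_layOff_le_of_range_subset {s : ℕ → ℕ} {n d k : ℕ} {D : Finset ℕ}
    (hDs : ∀ i ∈ D, 1 ≤ s i) (hDn : D ⊆ range n) (hcard : #D = d) (hkD : range k ⊆ D)
    (hout : ∀ i ∉ D, s i ≤ k)
    (hmaj : d + 1 + ∑ i ∈ range k, s i ≤ min (d + 1) (k + 1) + ∑ i ∈ range n, min (s i) (k + 1)) :
    ∑ i ∈ range k, layOff s D i ≤ ∑ i ∈ range n, min (layOff s D i) k := by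
  have hkd : k ≤ d := by simpa [hcard] using card_le_card hkD
  have hpre := sum_layOff_add_card hDs (range k)
  rw [inter_eq_left.2 hkD, card_range] at hpre
  have hmin : ∑ i ∈ range n, min (s i) (k + 1) = ∑ i ∈ range n, min (layOff s D i) k + d := by
    calc ∑ i ∈ range n, min (s i) (k + 1)
        = ∑ i ∈ range n, (min (layOff s D i) k + if i ∈ D then 1 else 0) :=
          sum_congr rfl fun i _ => by
            have := layOff_add_ite (hDs i)
            split_ifs at this ⊢ with h
            · omega
            · have := hout i h; omega
      _ = _ := by
          rw [sum_add_distrib, sum_boole, filter_mem_eq_inter, inter_eq_right.2 hDn, hcard,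
            Nat.cast_id]
  rw [min_eq_right (by omega)] at hmaj
  omega

lemma sum_layOff_le_of_threshold {s : ℕ → ℕ} {n k q : ℕ} {D : Finset ℕ}
    (hDs : ∀ i ∈ D, 1 ≤ s i) (hq : ∀ i, i < q ↔ k + 1 ≤ s i) (hqD : range q ⊆ D) (hqk : q ≤ k)
    (hkn : k ≤ n) (h : ∑ i ∈ range q, s i ≤ q * (k + 1) + ∑ i ∈ Ico k n, layOff s D i) :
    ∑ i ∈ range k, layOff s D i ≤ ∑ i ∈ range n, min (layOff s D i) k := by
  have hpre := sum_layOff_add_card hDs (range q)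
  rw [inter_eq_left.2 hqD, card_range] at hpre
  have hmin : ∑ i ∈ range n, min (layOff s D i) k = q * k + ∑ i ∈ Ico q n, layOff s D i := by
    rw [← sum_range_add_sum_Ico _ (hqk.trans hkn),
      sum_congr rfl fun i hi => min_eq_right (show k ≤ layOff s D i by
        have := (hq i).1 (mem_range.1 hi); have := sub_one_le_layOff s D i; omega),
      sum_congr rfl fun i hi => min_eq_left (show layOff s D i ≤ k by
        have := (hq i).not.1 (not_lt.2 (mem_Ico.1 hi).1); have := layOff_le s D i; omega)]
    simp [mul_comm]
  rw [hmin, ← sum_range_add_sum_Ico _ hqk, ← sum_Ico_consecutive _ hqk hkn]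
  linarith [mul_add_one q k]

namespace IsTieBlock

variable {s : ℕ → ℕ} {n d a β c k q : ℕ}

lemma card_Ico_inter_layOffSet (h : IsTieBlock s d a β c) (hsn : s n = 0) :
    #(Ico a n ∩ layOffSet a β d) + a = d := by
  have := h.add_le hsn
  have := h.le
  rw [show Ico a n ∩ layOffSet a β d = Ico (a + β) (d + β) by
    ext i; simp only [mem_inter, mem_Ico, mem_layOffSet]; omega, Nat.card_Ico]
  omega

lemma sum_range_le_of_le_threshold (h : IsTieBlock s d a β c) (hsn : s n = 0) (hcq : c ≤ q)
    (hqa : q ≤ a) (hak : a ≤ k) (hkn : k ≤ n)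
    (hmaj : d + 1 + ∑ i ∈ range q, s i ≤ min (d + 1) (q + 1) + ∑ i ∈ range n, min (s i) (q + 1)) :
    ∑ i ∈ range q, s i ≤ q * (k + 1) + ∑ i ∈ Ico k n, layOff s (layOffSet a β d) i := by
  have hle_c : ∀ i, a ≤ i → s i ≤ c := fun i hi => not_lt.1 ((h.lt_iff i).not.1 (by omega))
  have hhead : ∑ i ∈ range n, min (s i) (q + 1) ≤ a * (q + 1) + ∑ i ∈ Ico a n, s i := by
    rw [← sum_range_add_sum_Ico _ (hak.trans hkn)]
    gcongr with i
    · simpa using sum_le_sum fun i (_ : i ∈ range a) => min_le_right (s i) (q + 1)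
    · exact min_le_left _ _
  have htail := sum_layOff_add_card (fun i => h.one_le_of_mem) (Ico a n)
  have hcard := h.card_Ico_inter_layOffSet hsn
  rw [← sum_Ico_consecutive _ hak hkn] at htail
  have hmid : ∑ i ∈ Ico a k, layOff s (layOffSet a β d) i ≤ (k - a) * q := by
    simpa using sum_le_sum fun i (hi : i ∈ Ico a k) =>
      (layOff_le s _ i).trans ((hle_c i (mem_Ico.1 hi).1).trans hcq)
  rw [min_eq_right (by omega)] at hmaj
  have hkq : (k - a) * q + a * q = k * q := by rw [← add_mul, Nat.sub_add_cancel hak]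
  nlinarith

lemma sum_range_le_of_threshold_lt (h : IsTieBlock s d a β c) (hsn : s n = 0)
    (hsd : ∀ i, s i ≤ d + 1) (hqc : q < c) (hkd : k ≤ d) (hβ : 1 ≤ β) :
    ∑ i ∈ range q, s i ≤ q * (k + 1) + ∑ i ∈ Ico k n, layOff s (layOffSet a β d) i := by
  have hdn := h.add_le hsn
  have hhead : ∑ i ∈ range q, s i ≤ q * (d + 1) := by
    simpa [mul_comm] using sum_le_sum fun i (_ : i ∈ range q) => hsd i
  have htail : (d + 1 - k) * q ≤ ∑ i ∈ Ico k n, layOff s (layOffSet a β d) i :=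
    calc (d + 1 - k) * q = ∑ i ∈ Ico k (d + 1), q := by simp
      _ ≤ ∑ i ∈ Ico k (d + 1), layOff s (layOffSet a β d) i := sum_le_sum fun i hi => by
          have := (h.le_iff i).1 (by rw [mem_Ico] at hi; omega)
          have := sub_one_le_layOff s (layOffSet a β d) i
          omega
      _ ≤ _ := sum_le_sum_of_subset (Ico_subset_Ico_right (by omega))
  have hkq : (d + 1 - k) * q + k * q = (d + 1) * q := by
    rw [← add_mul, Nat.sub_add_cancel (by omega)]
  nlinarith

theorem majorizedByConj_layOff (h : IsTieBlock s d a β c) (hs : Antitone s) (hsn : s n = 0)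
    (hsd : ∀ i, s i ≤ d + 1)
    (hmaj : ∀ k, d + 1 + ∑ i ∈ range k, s i ≤
      min (d + 1) (k + 1) + ∑ i ∈ range n, min (s i) (k + 1)) :
    MajorizedByConj n (layOff s (layOffSet a β d)) := by
  intro k
  have hDs : ∀ i ∈ layOffSet a β d, 1 ≤ s i := fun i => h.one_le_of_mem
  have hdn := h.add_le hsn
  rcases le_or_gt (d + 1) k with hk | hk
  · exact sum_layOff_le_of_bound_le _ hsd (fun i => hs.eq_zero_of_le hsn) hk
  rcases le_or_gt (k + 1) (s d) with hsk | hsk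
  · exact sum_layOff_le_of_lt hs _ hsn hsd hsk
  by_cases hkD : range k ⊆ layOffSet a β d
  · exact sum_layOff_le_of_range_subset hDs (h.layOffSet_subset hsn) (card_layOffSet h.le) hkD
      (fun i hi => (h.le_of_notMem hs hi).trans (by omega)) (hmaj k)
  -- some `c` in `[0, k)` was passed over, so the block of `c`s reaches below `k`
  obtain ⟨i₀, hi₀k, hi₀D⟩ := not_subset.1 hkD
  rw [mem_range] at hi₀k
  rw [mem_layOffSet] at hi₀D
  have hck : c ≤ k := ((h.le_iff d).1 (by omega)).trans (by omega)
  obtain ⟨q, -, hq⟩ := hs.exists_lt_iff_le (c := k + 1) (N := d) (by omega)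
  have hqa : q ≤ a := by
    by_contra hqa
    have := (hq a).1 (by omega)
    have := (h.lt_iff a).not.1 (lt_irrefl a)
    omega
  refine sum_layOff_le_of_threshold hDs hq (fun i hi => mem_layOffSet.2 (Or.inl
    ((mem_range.1 hi).trans_le hqa))) (by omega) (by omega) ?_
  rcases le_or_gt c q with hcq | hqc
  · exact h.sum_range_le_of_le_threshold hsn hcq hqa (by omega) (by omega) (hmaj q)
  · exact h.sum_range_le_of_threshold_lt hsn hsd hqc (by omega) (by omega)

end IsTieBlock

lemma MajorizedByConj.tail {n d : ℕ} {t : ℕ → ℕ} (h : MajorizedByConj (n + 1) t)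
    (hd : t 0 = d + 1) (k : ℕ) :
    d + 1 + ∑ i ∈ range k, t (i + 1) ≤
      min (d + 1) (k + 1) + ∑ i ∈ range n, min (t (i + 1)) (k + 1) := by
  have := h (k + 1)
  rw [sum_range_succ', sum_range_succ', hd] at this
  omega

theorem symmRealizable_of_majorizedByConj {n : ℕ} {t : ℕ → ℕ} (ht : Antitone t) (htn : t n = 0)
    (h : MajorizedByConj n t) : SymmRealizable fun i : Fin n => t i := by
  induction n generalizing t with
  | zero => exact ⟨0, fun _ _ => Or.inl rfl, Matrix.IsSymm.ext fun _ _ => rfl, fun i => i.elim0⟩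
  | succ n ih =>
    obtain h0 | ⟨d, hd⟩ : t 0 = 0 ∨ ∃ d, t 0 = d + 1 := by cases t 0 <;> simp
    · refine ⟨0, fun _ _ => Or.inl rfl, Matrix.IsSymm.ext fun _ _ => rfl, fun i => ?_⟩
      simpa using (Nat.eq_zero_of_le_zero (h0 ▸ ht (Nat.zero_le i))).symm
    set s : ℕ → ℕ := fun i => t (i + 1)
    have hs : Antitone s := fun i j hij => ht (by omega)
    have hsn : s n = 0 := htn
    have hmaj := h.tail hd
    have hpos : d ≤ ∑ i ∈ range n, min (t (i + 1)) 1 := by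
      have := hmaj 0
      rw [sum_range_zero, zero_add] at this
      omega
    obtain ⟨a, β, c, hB⟩ := exists_isTieBlock hs hsn hpos
    set D := layOffSet a β d
    have hr := ih (hB.antitone_layOff hs) (Nat.eq_zero_of_le_zero ((layOff_le s D n).trans hsn.le))
      (hB.majorizedByConj_layOff hs hsn (fun i => hd ▸ ht (Nat.zero_le _)) hmaj)
    convert hr.cons (fun i => if (i : ℕ) ∈ D then 1 else 0) (fun i => by split_ifs <;> omega)
      using 1
    funext i
    cases i using Fin.cases with
    | zero =>
      rw [Fin.cons_zero, Fin.sum_univ_eq_sum_range (fun i => if i ∈ D then 1 else 0), sum_boole,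
        filter_mem_eq_inter, inter_eq_right.2 (hB.layOffSet_subset hsn), card_layOffSet hB.le]
      simp [hd, add_comm]
    | succ i =>
      rw [Fin.cons_succ, Pi.add_apply]
      exact (layOff_add_ite hB.one_le_of_mem).symm.trans (add_comm _ _)

theorem symmetric_zeroOne_general (n : ℕ) (R S : Fin n → ℕ) :
    (∃ A : Matrix (Fin n) (Fin n) ℕ,
        (∀ i j, A i j = 0 ∨ A i j = 1) ∧
        (∀ i, ∑ j, A i j = R i) ∧
        (∀ j, ∑ i, A i j = S j) ∧
        (∀ i j, A i j = A j i)) ↔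
      (R = S ∧ MajorizedBy (vecMS R) (conjMS (vecMS R))) := by
  obtain ⟨e, t, ht, htn, hte⟩ := exists_antitone_perm R
  rw [vecMS_eq_map_range hte, majorizedBy_conjMS_iff ht htn]
  constructor
  · rintro ⟨A, h01, hrow, hcol, hsymm⟩
    refine ⟨funext fun j => by rw [← hcol j, ← hrow j]; exact sum_congr rfl fun i _ => hsymm j i,
      SymmRealizable.majorizedByConj (fun i => ht.eq_zero_of_le htn) ?_⟩
    have hR : SymmRealizable R := ⟨A, h01, Matrix.IsSymm.ext fun i j => hsymm j i, hrow⟩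
    simpa [Function.comp_def, hte] using hR.comp_perm e
  · rintro ⟨rfl, hmaj⟩
    have hR : (fun i : Fin n => t i) ∘ e.symm = R := funext fun i => by simp [hte]
    obtain ⟨A, h01, hsymm, hrow⟩ :=
      hR ▸ (symmRealizable_of_majorizedByConj ht htn hmaj).comp_perm e.symm
    exact ⟨A, h01, hrow, fun j => (sum_congr rfl fun i _ => hsymm.apply j i).trans (hrow j),
      fun i j => (hsymm.apply i j).symm⟩

/-- **Symmetric (0,1)-matrices (Fulkerson–Hoffman–McAndrew).**
`𝒜^{-1}(R,S) ≠ ∅` iff `R = S` and `R ⪯ R*`. -/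
theorem symmetric_zeroOne (n : ℕ) (R S : Fin n → ℕ)
    (hsum : ∑ i, R i = ∑ j, S j)
    (hRle : ∀ i, R i ≤ n) (hSle : ∀ j, S j ≤ n) :
    (∃ A : Matrix (Fin n) (Fin n) ℕ,
        (∀ i j, A i j = 0 ∨ A i j = 1) ∧
        (∀ i, ∑ j, A i j = R i) ∧
        (∀ j, ∑ i, A i j = S j) ∧
        (∀ i j, A i j = A j i)) ↔
      (R = S ∧ MajorizedBy (vecMS R) (conjMS (vecMS R))) :=
  symmetric_zeroOne_general n R S
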